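/- arXiv:1603.05042 — 5 statements merged into one kernel-verified Lean document; each statement's English description precedes it below -/
import Mathlib

section
/- Let p, s > 1 and define φ : ℝ → ℝ by φ(t) = log(1+|t|^s)·|t|^{p−2}·t for t ≠ 0 and φ(0) = 0, and let Φ(t) = ∫₀ᵗ φ(r) dr. Then inf_{t>0} t·φ(t)/Φ(t) = p. -/
/-!
Write `L(t) = log (1 + t ^ s)`, so that `t φ(t) = L(t) t ^ p` for `t > 0`. Since `L` is
nondecreasing, `Φ(t) ≤ L(t) t ^ p / p`, i.e. the ratio is at least `p`. Conversely,
`Φ(t) - t ^ p / p * (L(t) - s / p)` vanishes at `0` and has derivative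
`s / p * t ^ (p - 1) / (1 + t ^ s) ≥ 0`, so the ratio is at most `p + s / (L(t) - s / p)`,
which tends to `p` as `t → ∞`.
-/

open Real Filter Topology intervalIntegral

lemma isGLB_of_forall_le_of_tendsto {α : Type*} [TopologicalSpace α] [Preorder α]
    [ClosedIciTopology α] {f : ℝ → α} {a : α} (hle : ∀ t > 0, a ≤ f t)
    (hlim : Tendsto f atTop (𝓝 a)) : IsGLB {r | ∃ t > (0 : ℝ), r = f t} a := by
  refine ⟨?_, fun b hb => ge_of_tendsto hlim ?_⟩
  · rintro r ⟨t, ht, rfl⟩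
    exact hle t ht
  · filter_upwards [eventually_gt_atTop 0] with t ht
    exact hb ⟨t, ht, rfl⟩

namespace LogPow

variable {p s t : ℝ}

-- On `[0, ∞)`, `integrand p s` is `φ`, `primitive p s` is `Φ` and `ratio p s t` is
-- `t φ(t) / Φ(t)`.
noncomputable def integrand (p s r : ℝ) : ℝ := log (1 + |r| ^ s) * |r| ^ (p - 1)

noncomputable def primitive (p s t : ℝ) : ℝ := ∫ r in (0 : ℝ)..t, integrand p s r

noncomputable def ratio (p s t : ℝ) : ℝ := t * integrand p s t / primitive p s t

lemma continuous_integrand (hp : 1 ≤ p) (hs : 0 ≤ s) : Continuous (integrand p s) := by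
  have hpow : Continuous fun r : ℝ => |r| ^ s := continuous_abs.rpow_const fun _ => Or.inr hs
  refine (hpow.const_add 1).log (fun r => ?_) |>.mul
    (continuous_abs.rpow_const fun _ => Or.inr (sub_nonneg.2 hp))
  positivity

lemma integrand_of_pos (ht : 0 < t) : integrand p s t = log (1 + t ^ s) * t ^ (p - 1) := by
  rw [integrand, abs_of_pos ht]

lemma integrand_pos (ht : 0 < t) : 0 < integrand p s t := by
  rw [integrand_of_pos ht]
  exact mul_pos (log_pos (by simp [rpow_pos_of_pos ht])) (rpow_pos_of_pos ht _)

lemma log_mul_rpow_mul_self_eq_integrand (hp : p ≠ 1) (ht : 0 ≤ t) :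
    log (1 + |t| ^ s) * |t| ^ (p - 2) * t = integrand p s t := by
  rcases ht.eq_or_lt with rfl | ht
  · simp [integrand, zero_rpow (sub_ne_zero.2 hp)]
  · rw [integrand_of_pos ht, abs_of_pos ht, mul_assoc, ← rpow_add_one ht.ne']
    ring_nf

lemma self_mul_integrand (ht : 0 < t) : t * integrand p s t = log (1 + t ^ s) * t ^ p := by
  rw [integrand_of_pos ht, rpow_sub_one ht.ne']
  field_simp

lemma primitive_pos (hp : 1 ≤ p) (hs : 0 ≤ s) (ht : 0 < t) : 0 < primitive p s t :=
  intervalIntegral_pos_of_pos_on ((continuous_integrand hp hs).intervalIntegrable 0 t)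
    (fun _ hr => integrand_pos hr.1) ht

lemma primitive_le (hp : 1 ≤ p) (hs : 0 ≤ s) (ht : 0 ≤ t) :
    primitive p s t ≤ log (1 + t ^ s) * t ^ p / p := by
  have hp0 : 0 < p := by linarith
  have hint :
      ∫ r in (0 : ℝ)..t, log (1 + t ^ s) * r ^ (p - 1) = log (1 + t ^ s) * t ^ p / p := by
    rw [integral_const_mul, integral_rpow (Or.inl (by linarith)), sub_add_cancel,
      zero_rpow hp0.ne', sub_zero, mul_div_assoc]
  rw [← hint]
  refine integral_mono_on ht ((continuous_integrand hp hs).intervalIntegrable 0 t)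
    ((intervalIntegrable_rpow (Or.inl (by linarith))).const_mul _) fun r ⟨hr0, hrt⟩ => ?_
  rw [integrand, abs_of_nonneg hr0]
  gcongr

lemma exists_hasDerivAt_rpow_div_mul_log_sub_le_integrand (hp : 0 < p) (hs : 0 ≤ s)
    (ht : 0 < t) : ∃ G', HasDerivAt (fun t => t ^ p / p * (log (1 + t ^ s) - s / p)) G' t ∧
      G' ≤ integrand p s t := by
  refine ⟨_, ((hasDerivAt_rpow_const (Or.inl ht.ne')).div_const p).mul
    ((((hasDerivAt_rpow_const (Or.inl ht.ne')).const_add 1).log (by positivity)).sub_const _), ?_⟩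
  have hfrac : t ^ s / (1 + t ^ s) ≤ 1 := div_le_one_of_le₀ (by linarith) (by positivity)
  have hsmall : s / p * t ^ (p - 1) * (t ^ s / (1 + t ^ s)) ≤ s / p * t ^ (p - 1) :=
    mul_le_of_le_one_right (by positivity) hfrac
  calc p * t ^ (p - 1) / p * (log (1 + t ^ s) - s / p)
        + t ^ p / p * (s * t ^ (s - 1) / (1 + t ^ s))
      = log (1 + t ^ s) * t ^ (p - 1) - s / p * t ^ (p - 1)
        + s / p * t ^ (p - 1) * (t ^ s / (1 + t ^ s)) := by
        rw [rpow_sub_one ht.ne' p, rpow_sub_one ht.ne' s]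
        field_simp
    _ ≤ integrand p s t := by
        rw [integrand_of_pos ht]
        linarith

lemma rpow_div_mul_log_sub_le_primitive (hp : 1 ≤ p) (hs : 0 ≤ s) (ht : 0 ≤ t) :
    t ^ p / p * (log (1 + t ^ s) - s / p) ≤ primitive p s t := by
  have hp0 : 0 < p := by linarith
  choose! G' hG' hG'_le using fun t (ht : 0 < t) =>
    exists_hasDerivAt_rpow_div_mul_log_sub_le_integrand (s := s) hp0 hs ht
  have hlog : ContinuousOn (fun t : ℝ => log (1 + t ^ s)) (Set.Ici 0) :=
    ((continuous_id.rpow_const fun _ => Or.inr hs).const_add 1).continuousOn.log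
      fun t ht => (add_pos_of_pos_of_nonneg one_pos (rpow_nonneg ht s)).ne'
  have hmono : MonotoneOn (fun t => primitive p s t - t ^ p / p * (log (1 + t ^ s) - s / p))
      (Set.Ici 0) := by
    refine monotoneOn_of_hasDerivWithinAt_nonneg (f' := fun t => integrand p s t - G' t)
      (convex_Ici 0) ?_ (fun t ht => ?_) (fun t ht => ?_)
    · have hprim : Continuous (primitive p s) :=
        continuous_primitive (continuous_integrand hp hs).intervalIntegrable 0
      exact hprim.continuousOn.sub
        (((continuous_id.rpow_const fun _ => Or.inr hp0.le).div_const p).continuousOn.mul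
          (hlog.sub continuousOn_const))
    · rw [interior_Ici] at ht
      exact (((continuous_integrand hp hs).integral_hasStrictDerivAt 0 t).hasDerivAt.sub
        (hG' t ht)).hasDerivWithinAt
    · rw [interior_Ici] at ht
      exact sub_nonneg.2 (hG'_le t ht)
  simpa [primitive, zero_rpow hp0.ne'] using hmono Set.self_mem_Ici ht ht

lemma le_ratio (hp : 1 ≤ p) (hs : 0 ≤ s) (ht : 0 < t) : p ≤ ratio p s t := by
  rw [ratio, self_mul_integrand ht, le_div_iff₀ (primitive_pos hp hs ht),
    ← le_div_iff₀' (by linarith)]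
  exact primitive_le hp hs ht.le

lemma ratio_le (hp : 1 ≤ p) (hs : 0 ≤ s) (ht : 0 < t) (hL : s / p < log (1 + t ^ s)) :
    ratio p s t ≤ p + s / (log (1 + t ^ s) - s / p) := by
  have hp0 : 0 < p := by linarith
  have hL1 : 0 ≤ log (1 + t ^ s) := (div_nonneg hs hp0.le).trans hL.le
  calc ratio p s t = log (1 + t ^ s) * t ^ p / primitive p s t := by
        rw [ratio, self_mul_integrand ht]
    _ ≤ log (1 + t ^ s) * t ^ p / (t ^ p / p * (log (1 + t ^ s) - s / p)) :=
        div_le_div_of_nonneg_left (by positivity) (by positivity)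
          (rpow_div_mul_log_sub_le_primitive hp hs ht.le)
    _ = p + s / (log (1 + t ^ s) - s / p) := by
        have : log (1 + t ^ s) * p - s ≠ 0 := (sub_pos.2 ((div_lt_iff₀ hp0).1 hL)).ne'
        field_simp
        ring

lemma tendsto_ratio_atTop (hp : 1 ≤ p) (hs : 0 < s) : Tendsto (ratio p s) atTop (𝓝 p) := by
  have hL : Tendsto (fun t : ℝ => log (1 + t ^ s)) atTop atTop :=
    tendsto_log_atTop.comp (tendsto_atTop_add_const_left _ 1 (tendsto_rpow_atTop hs))
  have hupper : Tendsto (fun t : ℝ => p + s / (log (1 + t ^ s) - s / p)) atTop (𝓝 p) := by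
    simpa [sub_eq_add_neg] using tendsto_const_nhds.add
      (tendsto_const_nhds.div_atTop (tendsto_atTop_add_const_right _ (-(s / p)) hL))
  refine tendsto_of_tendsto_of_tendsto_of_le_of_le' tendsto_const_nhds hupper ?_ ?_
  · filter_upwards [eventually_gt_atTop 0] with t ht using le_ratio hp hs.le ht
  · filter_upwards [eventually_gt_atTop 0, hL.eventually_gt_atTop (s / p)] with t ht hLt
      using ratio_le hp hs.le ht hLt

end LogPow

open LogPow

/-- For φ(t) = log(1+|t|^s)·|t|^{p−2}·t with p, s > 1 and
Φ(t) = ∫₀ᵗ φ, one has inf_{t>0} t·φ(t)/Φ(t) = p. -/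
theorem stmt9 (p s : ℝ) (hp : 1 < p) (hs : 1 < s) (φ Φ : ℝ → ℝ)
    (hφ : ∀ t : ℝ, φ t = Real.log (1 + |t| ^ s) * |t| ^ (p - 2) * t)
    (hΦ : ∀ t, Φ t = ∫ r in (0:ℝ)..t, φ r) :
    IsGLB {r : ℝ | ∃ t > (0:ℝ), r = t * φ t / Φ t} p := by
  have hφ_eq : ∀ t, 0 ≤ t → φ t = integrand p s t := fun t ht =>
    (hφ t).trans (log_mul_rpow_mul_self_eq_integrand hp.ne' ht)
  have hratio : ∀ t > 0, t * φ t / Φ t = ratio p s t := by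
    intro t ht
    rw [ratio, primitive, hφ_eq t ht.le, hΦ]
    congr 1
    refine integral_congr fun r hr => hφ_eq r ?_
    rw [Set.uIcc_of_le ht.le] at hr
    exact hr.1
  refine isGLB_of_forall_le_of_tendsto
    (fun t ht => (hratio t ht).symm ▸ le_ratio hp.le (by linarith) ht)
    ((tendsto_ratio_atTop hp.le (by linarith)).congr' ?_)
  filter_upwards [eventually_gt_atTop 0] with t ht using (hratio t ht).symm
end

section
/- Let p, s > 1 and define φ : ℝ → ℝ by φ(t) = log(1+|t|^s)·|t|^{p−2}·t for t ≠ 0 and φ(0) = 0, and let Φ(t) = ∫₀ᵗ φ(r) dr. Then sup_{t>0} t·φ(t)/Φ(t) = p + s. -/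
/-!
For `t ≥ 0` we have `t φ(t) = g(t) := t^p log(1 + t^s)` and `Φ(t) = ∫₀ᵗ x^{p-1} log(1 + x^s) dx`.
Since `x/(1+x) ≤ log(1+x)`, the derivative `x^{p-1} (p log(1+x^s) + s x^s/(1+x^s))` of `g` is at
most `(p+s) φ(x)`, so `g ≤ (p+s) Φ`. Conversely `log(1+x) ≤ x` gives `Φ(t) ≤ t^{p+s}/(p+s)` and
`g(t) ≥ t^{p+s}/(1+t^s)`, so the ratio is at least `(p+s)/(1+t^s)`, which tends to `p+s` as `t → 0⁺`.
-/

open Real Set Filter Topology intervalIntegral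

lemma div_one_add_le_log_one_add {x : ℝ} (hx : 0 ≤ x) : x / (1 + x) ≤ log (1 + x) :=
  calc x / (1 + x) = 1 - (1 + x)⁻¹ := by field_simp; ring
    _ ≤ log (1 + x) := one_sub_inv_le_log_of_pos (by linarith)

lemma abs_rpow_sub_two_mul_of_nonneg {p r : ℝ} (hp : p ≠ 1) (hr : 0 ≤ r) :
    |r| ^ (p - 2) * r = r ^ (p - 1) := by
  rw [abs_of_nonneg hr]
  rcases hr.eq_or_lt with rfl | hr
  · simp [zero_rpow (sub_ne_zero.2 hp)]
  · rw [show p - 1 = p - 2 + 1 by ring, rpow_add_one hr.ne']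

lemma isLUB_of_forall_le_of_tendsto_nhdsGT {f g : ℝ → ℝ} {a : ℝ} (hf : ∀ t > 0, f t ≤ a)
    (hgf : ∀ t > 0, g t ≤ f t) (hg : Tendsto g (𝓝[>] 0) (𝓝 a)) :
    IsLUB {r | ∃ t > 0, r = f t} a := by
  refine ⟨by rintro _ ⟨t, ht, rfl⟩; exact hf t ht, fun b hb => le_of_tendsto hg ?_⟩
  exact eventually_nhdsWithin_of_forall fun t ht => (hgf t ht).trans (hb ⟨t, ht, rfl⟩)

lemma tendsto_div_one_add_rpow_nhdsGT_zero {s : ℝ} (hs : 0 < s) (c : ℝ) :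
    Tendsto (fun t : ℝ => c / (1 + t ^ s)) (𝓝[>] 0) (𝓝 c) := by
  have hcont : ContinuousAt (fun t : ℝ => c / (1 + t ^ s)) 0 := by
    refine continuousAt_const.div (continuousAt_const.add
      (continuousAt_rpow_const 0 s (Or.inr hs.le))) ?_
    simp [zero_rpow hs.ne']
  simpa [zero_rpow hs.ne'] using hcont.tendsto.mono_left nhdsWithin_le_nhds

section LogOneAddRpow

variable {p s t : ℝ}

lemma continuousOn_rpow_mul_log_one_add_rpow (hp : 0 ≤ p) (hs : 0 ≤ s) :
    ContinuousOn (fun x : ℝ => x ^ p * log (1 + x ^ s)) (Ici 0) := by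
  refine (continuous_rpow_const hp).continuousOn.mul
    (ContinuousOn.log (continuous_const.add (continuous_rpow_const hs)).continuousOn ?_)
  intro x hx
  have : 0 ≤ x ^ s := rpow_nonneg hx s
  positivity

lemma hasDerivAt_rpow_mul_log_one_add_rpow {x : ℝ} (hx : 0 < x) :
    HasDerivAt (fun y : ℝ => y ^ p * log (1 + y ^ s))
      (x ^ (p - 1) * (p * log (1 + x ^ s) + s * (x ^ s / (1 + x ^ s)))) x := by
  have hden : 0 < 1 + x ^ s := by have := rpow_pos_of_pos hx s; linarith
  have hlog : HasDerivAt (fun y : ℝ => log (1 + y ^ s)) (s * x ^ (s - 1) / (1 + x ^ s)) x :=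
    ((hasDerivAt_rpow_const (Or.inl hx.ne')).const_add 1).log hden.ne'
  refine ((hasDerivAt_rpow_const (p := p) (Or.inl hx.ne')).mul hlog).congr_deriv ?_
  rw [rpow_sub_one hx.ne', rpow_sub_one hx.ne']
  field_simp

lemma rpow_mul_log_one_add_rpow_le_integral (hp : 1 ≤ p) (hs : 0 < s) (ht : 0 ≤ t) :
    t ^ p * log (1 + t ^ s) ≤ (p + s) * ∫ x in 0..t, x ^ (p - 1) * log (1 + x ^ s) := by
  rw [← integral_const_mul]
  have hcont := continuousOn_rpow_mul_log_one_add_rpow (p := p - 1) (by linarith) hs.le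
  have key := sub_le_integral_of_hasDeriv_right_of_le (g := fun x => x ^ p * log (1 + x ^ s))
    (φ := fun x => (p + s) * (x ^ (p - 1) * log (1 + x ^ s))) ht
    ((continuousOn_rpow_mul_log_one_add_rpow (by linarith) hs.le).mono Icc_subset_Ici_self)
    (fun x hx => (hasDerivAt_rpow_mul_log_one_add_rpow hx.1).hasDerivWithinAt)
    ((continuousOn_const.mul hcont).mono Icc_subset_Ici_self).integrableOn_Icc
    (fun x hx => by
      have hlog := div_one_add_le_log_one_add (rpow_nonneg hx.1.le s)
      rw [show (p + s) * (x ^ (p - 1) * log (1 + x ^ s))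
        = x ^ (p - 1) * (p * log (1 + x ^ s) + s * log (1 + x ^ s)) by ring]
      gcongr
      exact rpow_nonneg hx.1.le _)
  simpa [zero_rpow hs.ne'] using key

lemma integral_rpow_mul_log_one_add_rpow_le (hp : 1 ≤ p) (hs : 0 ≤ s) (ht : 0 ≤ t) :
    ∫ x in 0..t, x ^ (p - 1) * log (1 + x ^ s) ≤ t ^ (p + s) / (p + s) := by
  have hps : 0 < p + s := by linarith
  have key := integral_le_sub_of_hasDeriv_right_of_le ht
    ((continuous_rpow_const hps.le).continuousOn.div_const (p + s))
    (fun x hx => (((hasDerivAt_rpow_const (p := p + s) (Or.inl hx.1.ne')).div_const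
      (p + s)).hasDerivWithinAt))
    ((continuousOn_rpow_mul_log_one_add_rpow (p := p - 1) (by linarith) hs).mono
      Icc_subset_Ici_self).integrableOn_Icc
    (fun x hx => by
      rw [mul_div_cancel_left₀ _ hps.ne', show p + s - 1 = p - 1 + s by ring,
        rpow_add hx.1]
      have := log_le_sub_one_of_pos (by have := rpow_nonneg hx.1.le s; linarith :
        0 < 1 + x ^ s)
      exact mul_le_mul_of_nonneg_left (by linarith) (rpow_nonneg hx.1.le _))
  simpa [zero_rpow hps.ne'] using key

lemma rpow_add_div_one_add_rpow_le (ht : 0 < t) :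
    t ^ (p + s) / (1 + t ^ s) ≤ t ^ p * log (1 + t ^ s) := by
  rw [rpow_add ht, mul_div_assoc]
  gcongr
  exact div_one_add_le_log_one_add (rpow_nonneg ht.le s)

lemma integral_rpow_mul_log_one_add_rpow_pos (hp : 1 ≤ p) (hs : 0 < s) (ht : 0 < t) :
    0 < ∫ x in 0..t, x ^ (p - 1) * log (1 + x ^ s) := by
  have hlog : 0 < log (1 + t ^ s) := log_pos (by linarith [rpow_pos_of_pos ht s])
  refine pos_of_mul_pos_right ?_ (by linarith : (0 : ℝ) ≤ p + s)
  exact (mul_pos (rpow_pos_of_pos ht p) hlog).trans_le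
    (rpow_mul_log_one_add_rpow_le_integral hp hs ht.le)

end LogOneAddRpow

/-- For φ(t) = log(1+|t|^s)·|t|^{p−2}·t with p, s > 1 and
Φ(t) = ∫₀ᵗ φ, one has sup_{t>0} t·φ(t)/Φ(t) = p + s. -/
theorem stmt10 (p s : ℝ) (hp : 1 < p) (hs : 1 < s) (φ Φ : ℝ → ℝ)
    (hφ : ∀ t : ℝ, φ t = Real.log (1 + |t| ^ s) * |t| ^ (p - 2) * t)
    (hΦ : ∀ t, Φ t = ∫ r in (0:ℝ)..t, φ r) :
    IsLUB {r : ℝ | ∃ t > (0:ℝ), r = t * φ t / Φ t} (p + s) := by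
  have hφ_nonneg : ∀ r ≥ 0, φ r = r ^ (p - 1) * log (1 + r ^ s) := fun r hr => by
    rw [hφ, mul_assoc, abs_rpow_sub_two_mul_of_nonneg hp.ne' hr, abs_of_nonneg hr, mul_comm]
  have hratio : ∀ t > 0, t * φ t / Φ t
      = t ^ p * log (1 + t ^ s) / ∫ x in 0..t, x ^ (p - 1) * log (1 + x ^ s) := fun t ht => by
    have hΦt : Φ t = ∫ x in 0..t, x ^ (p - 1) * log (1 + x ^ s) := (hΦ t).trans <|
      integral_congr fun x hx => hφ_nonneg x (by rw [uIcc_of_le ht.le] at hx; exact hx.1)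
    rw [hΦt, hφ_nonneg t ht.le, rpow_sub_one ht.ne']
    field_simp
  have hps : 0 < p + s := by linarith
  refine isLUB_of_forall_le_of_tendsto_nhdsGT (fun t ht => ?_) (fun t ht => ?_)
    (tendsto_div_one_add_rpow_nhdsGT_zero (by linarith) (p + s))
  all_goals rw [hratio t ht]
  · rw [div_le_iff₀ (integral_rpow_mul_log_one_add_rpow_pos hp.le (by linarith) ht)]
    exact rpow_mul_log_one_add_rpow_le_integral hp.le (by linarith) ht.le
  · rw [div_le_div_iff₀ (by positivity)
      (integral_rpow_mul_log_one_add_rpow_pos hp.le (by linarith) ht)]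
    calc (p + s) * ∫ x in 0..t, x ^ (p - 1) * log (1 + x ^ s)
        ≤ t ^ (p + s) := (le_div_iff₀' hps).1
          (integral_rpow_mul_log_one_add_rpow_le hp.le (by linarith) ht.le)
      _ ≤ t ^ p * log (1 + t ^ s) * (1 + t ^ s) :=
          (div_le_iff₀ (by positivity)).1 (rpow_add_div_one_add_rpow_le ht)
end

section
/- Let p > 2 and define φ : ℝ → ℝ by φ(t) = |t|^{p−2}·t / log(1+|t|) for t ≠ 0 and φ(0) = 0, and let Φ(t) = ∫₀ᵗ φ(r) dr. Then sup_{t>0} t·φ(t)/Φ(t) = p. -/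
/-!
For `t > 0` we have `t φ(t) = tᵖ / log(1 + t)`, and since `log(1 + s) ≤ log(1 + t)` on `[0, t]`,
`Φ(t) ≥ tᵖ / (p log(1 + t))`; this gives `t φ(t) / Φ(t) ≤ p`. Conversely, if `t φ ≤ q Φ` for all
`t > 0`, then `Φ(t) t⁻ᵠ` is antitone, so `Φ(t) ≤ Φ(1) tᵠ` for `t ≥ 1`; together with the lower bound
this forces `t^(p - q) = O(log(1 + t))`, which is impossible unless `q ≥ p`.
-/

open Real Set Filter Topology Asymptotics

lemma le_mul_log_one_add {x : ℝ} (hx : 0 ≤ x) : x ≤ (1 + x) * log (1 + x) := by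
  have h := one_sub_inv_le_log_of_pos (by linarith : 0 < 1 + x)
  rw [show 1 - (1 + x)⁻¹ = x / (1 + x) by field_simp; ring, div_le_iff₀ (by linarith)] at h
  linarith

lemma le_mul_rpow_of_mul_deriv_le {F F' : ℝ → ℝ} {q : ℝ}
    (hF : ∀ t ≥ 1, HasDerivAt F (F' t) t) (hle : ∀ t ≥ 1, t * F' t ≤ q * F t)
    {t : ℝ} (ht : 1 ≤ t) : F t ≤ F 1 * t ^ q := by
  have hG : ∀ s ≥ 1, HasDerivAt (fun s => F s * s ^ (-q))
      (s ^ (-q - 1) * (s * F' s - q * F s)) s := by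
    intro s hs
    have hs0 : 0 < s := by linarith
    refine ((hF s hs).mul (hasDerivAt_rpow_const (p := -q) (Or.inl hs0.ne'))).congr_deriv ?_
    rw [rpow_sub hs0, rpow_one]
    field_simp
    ring
  have hanti : AntitoneOn (fun s => F s * s ^ (-q)) (Ici 1) := by
    refine antitoneOn_of_deriv_nonpos (convex_Ici 1) ?_ ?_ ?_
    · exact fun s hs => (hG s hs).continuousAt.continuousWithinAt
    · rw [interior_Ici]
      exact fun s hs => (hG s (le_of_lt hs)).differentiableAt.differentiableWithinAt
    · rw [interior_Ici]
      intro s hs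
      rw [(hG s hs.le).deriv]
      have : 0 < s := by linarith [mem_Ioi.1 hs]
      exact mul_nonpos_of_nonneg_of_nonpos (by positivity) (sub_nonpos.2 (hle s hs.le))
  have hdecay : F t * t ^ (-q) ≤ F 1 := by
    simpa only [one_rpow, mul_one] using hanti self_mem_Ici ht ht
  calc F t = F t * t ^ (-q) * t ^ q := by
        rw [mul_assoc, ← rpow_add (by linarith), neg_add_cancel, rpow_zero, mul_one]
    _ ≤ F 1 * t ^ q := by gcongr

lemma isLittleO_log_one_add_rpow_atTop {a : ℝ} (ha : 0 < a) :
    (fun t => log (1 + t)) =o[atTop] fun t => t ^ a := by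
  have hshift : (fun t => log (1 + t)) =o[atTop] fun t => (1 + t) ^ a :=
    (isLittleO_log_rpow_atTop ha).comp_tendsto (tendsto_atTop_add_const_left _ 1 tendsto_id)
  refine hshift.trans_isBigO (IsBigO.of_bound (2 ^ a) ?_)
  filter_upwards [eventually_ge_atTop 1] with t ht
  have ht0 : 0 ≤ t := by linarith
  rw [norm_of_nonneg (by positivity), norm_of_nonneg (by positivity), ← mul_rpow (by norm_num) ht0]
  exact rpow_le_rpow (by linarith) (by linarith) ha.le

/-- The formula also covers `t = 0`, where it reads `0 / log 1 = 0`. -/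
noncomputable def phiLog (p t : ℝ) : ℝ := |t| ^ (p - 2) * t / log (1 + |t|)

lemma phiLog_zero (p : ℝ) : phiLog p 0 = 0 := by
  simp [phiLog]

lemma phiLog_of_pos {p t : ℝ} (ht : 0 < t) : phiLog p t = t ^ (p - 1) / log (1 + t) := by
  rw [phiLog, abs_of_pos ht, ← rpow_add_one ht.ne']
  ring_nf

lemma mul_phiLog_of_pos {p t : ℝ} (ht : 0 < t) : t * phiLog p t = t ^ p / log (1 + t) := by
  rw [phiLog_of_pos ht, mul_div_assoc', mul_comm, ← rpow_add_one ht.ne', sub_add_cancel]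

lemma phiLog_pos {p t : ℝ} (ht : 0 < t) : 0 < phiLog p t := by
  rw [phiLog_of_pos ht]
  exact div_pos (rpow_pos_of_pos ht _) (log_pos (by linarith))

lemma abs_phiLog_le (p t : ℝ) : |phiLog p t| ≤ |t| ^ (p - 2) * (1 + |t|) := by
  have hlog : 0 ≤ log (1 + |t|) := log_nonneg (by linarith [abs_nonneg t])
  rw [phiLog, abs_div, abs_mul, abs_of_nonneg (rpow_nonneg (abs_nonneg t) _), abs_of_nonneg hlog,
    mul_div_assoc]
  gcongr
  exact div_le_of_le_mul₀ hlog (by positivity) (le_mul_log_one_add (abs_nonneg t))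

lemma continuous_phiLog {p : ℝ} (hp : 2 < p) : Continuous (phiLog p) := by
  rw [continuous_iff_continuousAt]
  intro t
  rcases eq_or_ne t 0 with rfl | ht
  · have hbound : Tendsto (fun t : ℝ => |t| ^ (p - 2) * (1 + |t|)) (𝓝 0) (𝓝 0) := by
      have hcont : Continuous (fun t : ℝ => |t| ^ (p - 2) * (1 + |t|)) := by
        fun_prop (disch := linarith)
      simpa [zero_rpow (by linarith : p - 2 ≠ 0)] using hcont.tendsto 0
    rw [ContinuousAt, phiLog_zero]
    exact squeeze_zero_norm (abs_phiLog_le p) hbound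
  · have hlog : log (1 + |t|) ≠ 0 := (log_pos (by simpa using ht)).ne'
    have hpos : 1 + |t| ≠ 0 := by positivity
    have hexp : |t| ≠ 0 ∨ 0 ≤ p - 2 := Or.inr (by linarith)
    unfold phiLog
    fun_prop (disch := assumption)

lemma integral_phiLog_pos {p t : ℝ} (hp : 2 < p) (ht : 0 < t) : 0 < ∫ s in 0..t, phiLog p s :=
  intervalIntegral.intervalIntegral_pos_of_pos_on ((continuous_phiLog hp).intervalIntegrable 0 t)
    (fun _ hs => phiLog_pos hs.1) ht

lemma rpow_le_mul_log_mul_integral_phiLog {p t : ℝ} (hp : 2 < p) (ht : 0 < t) :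
    t ^ p ≤ p * log (1 + t) * ∫ s in 0..t, phiLog p s := by
  have hpow_le : ∀ s ∈ Ioo 0 t, s ^ (p - 1) ≤ log (1 + t) * phiLog p s := by
    intro s ⟨hs0, hst⟩
    rw [phiLog_of_pos hs0, mul_div_assoc', le_div_iff₀ (log_pos (by linarith)), mul_comm]
    gcongr
  have hint := intervalIntegral.integral_mono_on_of_le_Ioo ht.le
    (intervalIntegral.intervalIntegrable_rpow' (by linarith))
    (((continuous_phiLog hp).intervalIntegrable 0 t).const_mul _) hpow_le
  rw [integral_rpow (Or.inl (by linarith)), intervalIntegral.integral_const_mul,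
    sub_add_cancel, zero_rpow (by linarith), sub_zero, div_le_iff₀ (by linarith)] at hint
  linarith

lemma mul_phiLog_div_integral_le {p t : ℝ} (hp : 2 < p) (ht : 0 < t) :
    t * phiLog p t / ∫ s in 0..t, phiLog p s ≤ p := by
  rw [div_le_iff₀ (integral_phiLog_pos hp ht), mul_phiLog_of_pos ht,
    div_le_iff₀ (log_pos (by linarith))]
  linarith [rpow_le_mul_log_mul_integral_phiLog hp ht]

lemma exists_lt_mul_phiLog {p q : ℝ} (hp : 2 < p) (hq : q < p) :
    ∃ t > 0, q * ∫ s in 0..t, phiLog p s < t * phiLog p t := by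
  set Φ : ℝ → ℝ := fun t => ∫ s in 0..t, phiLog p s
  by_contra! hle
  have hΦ : ∀ t ≥ 1, Φ t ≤ Φ 1 * t ^ q :=
    fun t => le_mul_rpow_of_mul_deriv_le
      (fun t _ => ((continuous_phiLog hp).integral_hasStrictDerivAt 0 t).hasDerivAt)
      (fun t ht => hle t (by linarith))
  have hgrowth : ∀ t ≥ 1, t ^ (p - q) ≤ p * Φ 1 * log (1 + t) := by
    intro t ht
    have ht0 : 0 < t := by linarith
    have hlog : 0 ≤ log (1 + t) := log_nonneg (by linarith)
    refine le_of_mul_le_mul_right ?_ (rpow_pos_of_pos ht0 q)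
    calc t ^ (p - q) * t ^ q = t ^ p := by rw [← rpow_add ht0, sub_add_cancel]
      _ ≤ p * log (1 + t) * Φ t := rpow_le_mul_log_mul_integral_phiLog hp ht0
      _ ≤ p * log (1 + t) * (Φ 1 * t ^ q) := by gcongr; exact hΦ t ht
      _ = p * Φ 1 * log (1 + t) * t ^ q := by ring
  obtain ⟨t, hsmall, ht⟩ := (((isLittleO_log_one_add_rpow_atTop (sub_pos.2 hq)).const_mul_left
    (p * Φ 1)).bound one_half_pos |>.and (eventually_ge_atTop 1)).exists
  have hpos : 0 < t ^ (p - q) := rpow_pos_of_pos (by linarith) _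
  rw [norm_of_nonneg hpos.le, norm_eq_abs] at hsmall
  linarith [hgrowth t ht, le_abs_self (p * Φ 1 * log (1 + t))]

/-- For φ(t) = |t|^{p−2}·t / log(1+|t|) (φ(0) = 0) with p > 2 and
Φ(t) = ∫₀ᵗ φ, one has sup_{t>0} t·φ(t)/Φ(t) = p. -/
theorem stmt12 (p : ℝ) (hp : 2 < p) (φ Φ : ℝ → ℝ)
    (hφ : ∀ t : ℝ, t ≠ 0 → φ t = |t| ^ (p - 2) * t / Real.log (1 + |t|))
    (hφ0 : φ 0 = 0)
    (hΦ : ∀ t, Φ t = ∫ r in (0:ℝ)..t, φ r) :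
    IsLUB {r : ℝ | ∃ t > (0:ℝ), r = t * φ t / Φ t} p := by
  obtain rfl : φ = phiLog p := funext fun t => by
    rcases eq_or_ne t 0 with rfl | ht
    · rw [hφ0, phiLog_zero]
    · exact hφ t ht
  obtain rfl : Φ = fun t => ∫ s in 0..t, phiLog p s := funext hΦ
  refine ⟨?_, fun q hq => ?_⟩
  · rintro r ⟨t, ht, rfl⟩
    exact mul_phiLog_div_integral_le hp ht
  · by_contra! hqp
    obtain ⟨t, ht, hlt⟩ := exists_lt_mul_phiLog hp hqp
    have hle := hq ⟨t, ht, rfl⟩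
    rw [div_le_iff₀ (integral_phiLog_pos hp ht)] at hle
    linarith
end

section
/- Let φ : ℝ → ℝ be an odd, strictly increasing homeomorphism from ℝ onto ℝ, let N ≥ 1, and define A : ℝ^N → ℝ^N by A(ξ) = (φ(|ξ|)/|ξ|)·ξ for ξ ≠ 0 and A(0) = 0. Then for all ξ, ψ ∈ ℝ^N one has ⟨A(ξ) − A(ψ), ξ − ψ⟩ ≥ 0, and equality holds if and only if ξ = ψ. -/
/-!
Write `A x = c(x) • x` with `c(x) = φ ‖x‖ / ‖x‖ ≥ 0`. Expanding the inner product gives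
`⟪A x - A y, x - y⟫ = (φ ‖x‖ - φ ‖y‖) (‖x‖ - ‖y‖) + (c(x) + c(y)) (‖x‖ ‖y‖ - ⟪x, y⟫)`:
the first term is nonnegative by monotonicity of `φ`, the second by Cauchy–Schwarz.
If the sum vanishes, the first term forces `‖x‖ = ‖y‖`, and then the second term is
`c(x) ‖x - y‖²`, which forces `x = y`.
-/

open RealInnerProductSpace

lemma Monotone.mul_sub_sub_nonneg {φ : ℝ → ℝ} (hφ : Monotone φ) (a b : ℝ) :
    0 ≤ (φ a - φ b) * (a - b) := by
  rcases le_total a b with hab | hab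
  · exact mul_nonneg_of_nonpos_of_nonpos (sub_nonpos.2 (hφ hab)) (sub_nonpos.2 hab)
  · exact mul_nonneg (sub_nonneg.2 (hφ hab)) (sub_nonneg.2 hab)

lemma StrictMono.eq_of_mul_sub_sub_eq_zero {φ : ℝ → ℝ} (hφ : StrictMono φ) {a b : ℝ}
    (h : (φ a - φ b) * (a - b) = 0) : a = b := by
  rcases mul_eq_zero.1 h with h | h
  · exact hφ.injective (sub_eq_zero.1 h)
  · exact sub_eq_zero.1 h

lemma div_norm_mul_norm {E : Type*} [NormedAddCommGroup E] {φ : ℝ → ℝ} (hφ0 : φ 0 = 0)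
    (x : E) : φ ‖x‖ / ‖x‖ * ‖x‖ = φ ‖x‖ := by
  rcases eq_or_ne x 0 with rfl | hx
  · simp [hφ0]
  · exact div_mul_cancel₀ _ (norm_ne_zero_iff.2 hx)

lemma div_norm_nonneg {E : Type*} [SeminormedAddCommGroup E] {φ : ℝ → ℝ}
    (hφ : Monotone φ) (hφ0 : φ 0 = 0) (x : E) : 0 ≤ φ ‖x‖ / ‖x‖ :=
  div_nonneg (hφ0 ▸ hφ (norm_nonneg x)) (norm_nonneg x)

section RadialMap

variable {E : Type*} [NormedAddCommGroup E] [InnerProductSpace ℝ E]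

/-- At `x = 0` the division `φ 0 / 0` is the junk value `0`, so `radialMap φ 0 = 0`. -/
noncomputable def radialMap (φ : ℝ → ℝ) (x : E) : E := (φ ‖x‖ / ‖x‖) • x

lemma inner_smul_sub_smul_sub (c₁ c₂ : ℝ) (x y : E) :
    ⟪c₁ • x - c₂ • y, x - y⟫ =
      (c₁ * ‖x‖ - c₂ * ‖y‖) * (‖x‖ - ‖y‖) + (c₁ + c₂) * (‖x‖ * ‖y‖ - ⟪x, y⟫) := by
  simp only [inner_sub_left, inner_sub_right, real_inner_smul_left,
    real_inner_self_eq_norm_sq, real_inner_comm x y]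
  ring

lemma inner_radialMap_sub {φ : ℝ → ℝ} (hφ0 : φ 0 = 0) (x y : E) :
    ⟪radialMap φ x - radialMap φ y, x - y⟫ =
      (φ ‖x‖ - φ ‖y‖) * (‖x‖ - ‖y‖) +
        (φ ‖x‖ / ‖x‖ + φ ‖y‖ / ‖y‖) * (‖x‖ * ‖y‖ - ⟪x, y⟫) := by
  rw [radialMap, radialMap, inner_smul_sub_smul_sub, div_norm_mul_norm hφ0,
    div_norm_mul_norm hφ0]

lemma inner_radialMap_sub_nonneg {φ : ℝ → ℝ} (hφ : Monotone φ) (hφ0 : φ 0 = 0) (x y : E) :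
    0 ≤ ⟪radialMap φ x - radialMap φ y, x - y⟫ := by
  rw [inner_radialMap_sub hφ0]
  exact add_nonneg (hφ.mul_sub_sub_nonneg _ _) <|
    mul_nonneg (add_nonneg (div_norm_nonneg hφ hφ0 x) (div_norm_nonneg hφ hφ0 y))
      (sub_nonneg.2 (real_inner_le_norm x y))

lemma inner_radialMap_sub_eq_zero_iff {φ : ℝ → ℝ} (hφ : StrictMono φ) (hφ0 : φ 0 = 0)
    (x y : E) : ⟪radialMap φ x - radialMap φ y, x - y⟫ = 0 ↔ x = y := by
  refine ⟨fun h => ?_, fun h => by rw [h, sub_self, inner_zero_left]⟩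
  rw [inner_radialMap_sub hφ0] at h
  have hCS := sub_nonneg.2 (real_inner_le_norm x y)
  have hc :=
    add_nonneg (div_norm_nonneg hφ.monotone hφ0 x) (div_norm_nonneg hφ.monotone hφ0 y)
  obtain ⟨hmono_term, hCS_term⟩ :=
    (add_eq_zero_iff_of_nonneg (hφ.monotone.mul_sub_sub_nonneg _ _) (mul_nonneg hc hCS)).1 h
  have hnorm : ‖x‖ = ‖y‖ := hφ.eq_of_mul_sub_sub_eq_zero hmono_term
  rcases eq_or_ne x 0 with rfl | hx
  · exact (norm_eq_zero.1 (hnorm.symm.trans norm_zero)).symm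
  have hc_pos : 0 < φ ‖x‖ / ‖x‖ + φ ‖y‖ / ‖y‖ := by
    have hxpos := norm_pos_iff.2 hx
    have hypos := hnorm ▸ hxpos
    exact add_pos (div_pos (hφ0 ▸ hφ hxpos) hxpos) (div_pos (hφ0 ▸ hφ hypos) hypos)
  have hinner : ⟪x, y⟫ = ‖x‖ * ‖y‖ :=
    (sub_eq_zero.1 ((mul_eq_zero.1 hCS_term).resolve_left hc_pos.ne')).symm
  have hdist : ‖x - y‖ ^ 2 = 0 := by
    rw [norm_sub_sq_real, hinner, hnorm]
    ring
  exact sub_eq_zero.1 (norm_eq_zero.1 (pow_eq_zero_iff two_ne_zero |>.1 hdist))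

end RadialMap

theorem stmt14_general (N : ℕ) (φ : ℝ → ℝ)
    (hodd : ∀ t, φ (-t) = -φ t)
    (hmono : StrictMono φ)
    (A : EuclideanSpace ℝ (Fin N) → EuclideanSpace ℝ (Fin N))
    (hA : ∀ ξ : EuclideanSpace ℝ (Fin N), ξ ≠ 0 → A ξ = (φ ‖ξ‖ / ‖ξ‖) • ξ)
    (hA0 : A 0 = 0) :
    ∀ ξ ψ : EuclideanSpace ℝ (Fin N),
      ⟪A ξ - A ψ, ξ - ψ⟫ ≥ 0 ∧ (⟪A ξ - A ψ, ξ - ψ⟫ = 0 ↔ ξ = ψ) := by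
  have hφ0 : φ 0 = 0 := by linarith [neg_zero (G := ℝ) ▸ hodd 0]
  have hA_eq : A = radialMap φ := funext fun ξ => by
    rcases eq_or_ne ξ 0 with rfl | hξ
    · simp [hA0, radialMap]
    · exact hA ξ hξ
  intro ξ ψ
  rw [hA_eq]
  exact ⟨inner_radialMap_sub_nonneg hmono.monotone hφ0 ξ ψ,
    inner_radialMap_sub_eq_zero_iff hmono hφ0 ξ ψ⟩

/-- For A(ξ) = (φ(|ξ|)/|ξ|)·ξ (A(0)=0), one has
⟨A(ξ) − A(ψ), ξ − ψ⟩ ≥ 0, with equality iff ξ = ψ. -/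
theorem stmt14 (N : ℕ) (hN : 1 ≤ N) (φ : ℝ → ℝ)
    (hodd : ∀ t, φ (-t) = -φ t)
    (hmono : StrictMono φ)
    (hcont : Continuous φ)
    (hsurj : Function.Surjective φ)
    (A : EuclideanSpace ℝ (Fin N) → EuclideanSpace ℝ (Fin N))
    (hA : ∀ ξ : EuclideanSpace ℝ (Fin N), ξ ≠ 0 → A ξ = (φ ‖ξ‖ / ‖ξ‖) • ξ)
    (hA0 : A 0 = 0) :
    ∀ ξ ψ : EuclideanSpace ℝ (Fin N),
      ⟪A ξ - A ψ, ξ - ψ⟫ ≥ 0 ∧ (⟪A ξ - A ψ, ξ - ψ⟫ = 0 ↔ ξ = ψ) :=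
  stmt14_general N φ hodd hmono A hA hA0
end

section
/- Let φ : ℝ → ℝ be an odd, strictly increasing homeomorphism from ℝ onto ℝ, let Φ(t) = ∫₀ᵗ φ(s) ds, and assume that the map t ↦ Φ(√t) is convex on [0, ∞). Then for every N ≥ 1 and all ξ, η ∈ ℝ^N one has Φ(|ξ − η|/2) + Φ(|ξ + η|/2) ≤ (1/2)·Φ(|ξ|) + (1/2)·Φ(|η|), where |·| is the Euclidean norm on ℝ^N. -/
/-!
Writing `Ψ t = Φ (√t)`, the inequality is a statement about `Ψ` at squared norms. A convex `Ψ`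
on `[0, ∞)` with `Ψ 0 = 0` is superadditive, so the left side is at most
`Ψ (‖ξ - η‖² / 4 + ‖ξ + η‖² / 4)`. By the parallelogram law this argument is the midpoint of
`‖ξ‖²` and `‖η‖²`, and convexity of `Ψ` bounds it by the right side.
-/

open Set

namespace ConvexOn

variable {f : ℝ → ℝ}

theorem map_mul_le_of_map_zero_nonpos (hf : ConvexOn ℝ (Ici 0) f) (h₀ : f 0 ≤ 0) {x t : ℝ}
    (hx : 0 ≤ x) (ht₀ : 0 ≤ t) (ht₁ : t ≤ 1) : f (t * x) ≤ t * f x := by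
  have h := hf.2 (mem_Ici.2 hx) (mem_Ici.2 le_rfl) ht₀ (sub_nonneg.2 ht₁) (add_sub_cancel t 1)
  simp only [smul_eq_mul, mul_zero, add_zero] at h
  nlinarith

theorem add_le_map_add_of_map_zero_nonpos (hf : ConvexOn ℝ (Ici 0) f) (h₀ : f 0 ≤ 0) {a b : ℝ}
    (ha : 0 ≤ a) (hb : 0 ≤ b) : f a + f b ≤ f (a + b) := by
  rcases (add_nonneg ha hb).eq_or_lt with hab | hab
  · obtain ⟨rfl, rfl⟩ : a = 0 ∧ b = 0 := ⟨by linarith, by linarith⟩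
    simpa using h₀
  have hsplit : ∀ c, 0 ≤ c → c ≤ a + b → f c ≤ c / (a + b) * f (a + b) := fun c hc hcab => by
    have h := hf.map_mul_le_of_map_zero_nonpos h₀ hab.le (div_nonneg hc hab.le)
      ((div_le_one hab).2 hcab)
    rwa [div_mul_cancel₀ c hab.ne'] at h
  have hfa := hsplit a ha (le_add_of_nonneg_right hb)
  have hfb := hsplit b hb (le_add_of_nonneg_left ha)
  calc f a + f b ≤ a / (a + b) * f (a + b) + b / (a + b) * f (a + b) := add_le_add hfa hfb
    _ = f (a + b) := by field_simp

end ConvexOn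

theorem map_half_norm_sub_add_map_half_norm_add_le {E : Type*} [NormedAddCommGroup E]
    [InnerProductSpace ℝ E] {Φ : ℝ → ℝ} (hconv : ConvexOn ℝ (Ici 0) fun t => Φ (√t))
    (h₀ : Φ 0 ≤ 0) (x y : E) :
    Φ (‖x - y‖ / 2) + Φ (‖x + y‖ / 2) ≤ 1 / 2 * Φ ‖x‖ + 1 / 2 * Φ ‖y‖ := by
  set Ψ : ℝ → ℝ := fun t => Φ (√t)
  have hΨ_sq : ∀ c : ℝ, 0 ≤ c → Φ c = Ψ (c ^ 2) := fun c hc => by simp [Ψ, Real.sqrt_sq hc]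
  have hparallelogram :
      (‖x - y‖ / 2) ^ 2 + (‖x + y‖ / 2) ^ 2 = 1 / 2 * ‖x‖ ^ 2 + 1 / 2 * ‖y‖ ^ 2 := by
    linear_combination parallelogram_law_with_norm ℝ x y / 4
  rw [hΨ_sq _ (by positivity), hΨ_sq (‖x + y‖ / 2) (by positivity), hΨ_sq ‖x‖ (norm_nonneg x),
    hΨ_sq ‖y‖ (norm_nonneg y)]
  calc Ψ ((‖x - y‖ / 2) ^ 2) + Ψ ((‖x + y‖ / 2) ^ 2)
      ≤ Ψ ((‖x - y‖ / 2) ^ 2 + (‖x + y‖ / 2) ^ 2) :=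
        hconv.add_le_map_add_of_map_zero_nonpos (by simpa [Ψ] using h₀) (sq_nonneg _) (sq_nonneg _)
    _ = Ψ (1 / 2 * ‖x‖ ^ 2 + 1 / 2 * ‖y‖ ^ 2) := by rw [hparallelogram]
    _ ≤ 1 / 2 * Ψ (‖x‖ ^ 2) + 1 / 2 * Ψ (‖y‖ ^ 2) :=
        hconv.2 (mem_Ici.2 (sq_nonneg _)) (mem_Ici.2 (sq_nonneg _)) (by norm_num) (by norm_num)
          (by norm_num)

theorem stmt19_general (φ Φ : ℝ → ℝ)
    (hΦ : ∀ t, Φ t = ∫ s in (0:ℝ)..t, φ s)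
    (hconv : ConvexOn ℝ (Set.Ici (0:ℝ)) (fun t => Φ (Real.sqrt t))) :
    ∀ (N : ℕ), 1 ≤ N → ∀ ξ η : EuclideanSpace ℝ (Fin N),
      Φ (‖ξ - η‖ / 2) + Φ (‖ξ + η‖ / 2) ≤ (1 / 2) * Φ ‖ξ‖ + (1 / 2) * Φ ‖η‖ := by
  intro N _ ξ η
  exact map_half_norm_sub_add_map_half_norm_add_le hconv (by simp [hΦ]) ξ η

/-- If Φ(t) = ∫₀ᵗ φ for an odd, strictly increasing homeomorphism φ
of ℝ, and t ↦ Φ(√t) is convex on [0,∞), then the pointwise Clarkson-type inequality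
Φ(|ξ−η|/2) + Φ(|ξ+η|/2) ≤ (1/2)Φ(|ξ|) + (1/2)Φ(|η|) holds in ℝ^N. -/
theorem stmt19 (φ Φ : ℝ → ℝ)
    (hodd : ∀ t, φ (-t) = -φ t)
    (hmono : StrictMono φ)
    (hcont : Continuous φ)
    (hsurj : Function.Surjective φ)
    (hΦ : ∀ t, Φ t = ∫ s in (0:ℝ)..t, φ s)
    (hconv : ConvexOn ℝ (Set.Ici (0:ℝ)) (fun t => Φ (Real.sqrt t))) :
    ∀ (N : ℕ), 1 ≤ N → ∀ ξ η : EuclideanSpace ℝ (Fin N),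
      Φ (‖ξ - η‖ / 2) + Φ (‖ξ + η‖ / 2) ≤ (1 / 2) * Φ ‖ξ‖ + (1 / 2) * Φ ‖η‖ :=
  stmt19_general φ Φ hΦ hconv
end
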